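/- Let H be a mesh and suppose H ⊢ c{xs}n (the distributed dimension c{xs}n is well-formed over H). Then the image of the base offset map ⟦c{xs}n⟧_D, over all index tuples over H, is exactly the set of natural numbers m such that c divides m and m < n. -/

import Mathlib

/-! ## Meshes, index tuples, distributed dimensions and types -/

structure Mesh where
  axes : Finset String
  size : String → ℕ
  size_pos : ∀ x ∈ axes, 1 ≤ size x

def Mesh.hasAxis (H : Mesh) (x : String) (n : ℕ) : Prop :=
  x ∈ H.axes ∧ H.size x = n

abbrev IndexTuple (H : Mesh) : Type :=
  {ι : String → ℕ // ∀ x : String, (x ∈ H.axes → ι x < H.size x) ∧ (x ∉ H.axes → ι x = 0)}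

structure Dim where
  tile : ℕ
  axes : List String
  global : ℕ
deriving DecidableEq

abbrev DType := List Dim

def Mesh.WFDim (H : Mesh) (d : Dim) : Prop :=
  1 ≤ d.tile ∧ d.axes.Nodup ∧ (∀ x ∈ d.axes, x ∈ H.axes) ∧
    d.tile * (d.axes.map H.size).prod = d.global

def Mesh.WFType (H : Mesh) (τ : DType) : Prop :=
  (∀ d ∈ τ, H.WFDim d) ∧ List.Pairwise (fun d e => ∀ x ∈ d.axes, x ∉ e.axes) τ

def globaltype (τ : DType) : List ℕ := τ.map Dim.global
def localtype (τ : DType) : List ℕ := τ.map Dim.tile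
def localsize (τ : DType) : ℕ := (τ.map Dim.tile).prod

def typeAxes : DType → List String
  | [] => []
  | d :: τ => d.axes ++ typeAxes τ

/-- Base offset map of a distributed dimension, `⟦c{xs}n⟧_D`. -/
def dimOffset (H : Mesh) : ℕ → List String → (String → ℕ) → ℕ
  | _, [], _ => 0
  | c, x :: xs, ι => c * ι x + dimOffset H (c * H.size x) xs ι

abbrev BOM (H : Mesh) : Type := IndexTuple H → List ℕ

/-- Base offset map of a distributed type, `⟦τ⟧_T`. -/
def typeOffset (H : Mesh) (τ : DType) : BOM H :=
  fun ι => τ.map (fun d => dimOffset H d.tile d.axes ι.val)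

/-! ## Collective operations (high-level typing rules) -/

inductive Label where
  | allGather (i : ℕ)
  | dynSlice (i : ℕ) (x : String)
  | allToAll (i j : ℕ)
  | allPermute
deriving DecidableEq

inductive OpKind where
  | gather | slice | toAll | permute
deriving DecidableEq

def Label.kind : Label → OpKind
  | .allGather _ => .gather
  | .dynSlice _ _ => .slice
  | .allToAll _ _ => .toAll
  | .allPermute => .permute

inductive Step (H : Mesh) : Label → DType → DType → Prop where
  | allGather {τ : DType} (i : ℕ) {c : ℕ} {x : String} {xs : List String} {s n : ℕ}
      (hwf : H.WFType τ) (hx : H.hasAxis x n)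
      (hi : τ[i]? = some ⟨c, x :: xs, s⟩) :
      Step H (.allGather i) τ (τ.set i ⟨c * n, xs, s⟩)
  | dynSlice {τ : DType} (i : ℕ) (x : String) {c : ℕ} {xs : List String} {s n : ℕ}
      (hwf : H.WFType τ) (hx : H.hasAxis x n) (hfresh : x ∉ typeAxes τ)
      (hi : τ[i]? = some ⟨c * n, xs, s⟩) :
      Step H (.dynSlice i x) τ (τ.set i ⟨c, x :: xs, s⟩)
  | allToAll {τ : DType} (i j : ℕ) {ci : ℕ} {x : String} {xsi : List String} {si cj : ℕ}
      {xsj : List String} {sj n : ℕ}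
      (hwf : H.WFType τ) (hij : i ≠ j) (hx : H.hasAxis x n)
      (hi : τ[i]? = some ⟨ci, x :: xsi, si⟩)
      (hj : τ[j]? = some ⟨cj, xsj, sj⟩)
      (hdvd : n ∣ cj) :
      Step H (.allToAll i j) τ ((τ.set i ⟨ci * n, xsi, si⟩).set j ⟨cj / n, x :: xsj, sj⟩)
  | allPermute {τ₁ τ₂ : DType}
      (hwf1 : H.WFType τ₁) (hwf2 : H.WFType τ₂)
      (hl : localtype τ₁ = localtype τ₂) (hg : globaltype τ₁ = globaltype τ₂) :
      Step H .allPermute τ₁ τ₂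

/-! ## Sequences of collective operations -/

inductive CSeq (H : Mesh) : DType → DType → Type where
  | nil (τ : DType) : CSeq H τ τ
  | cons {τ₁ τ₂ τ₃ : DType} (p : Label) (h : Step H p τ₁ τ₂) (s : CSeq H τ₂ τ₃) : CSeq H τ₁ τ₃

def CSeq.labels {H : Mesh} : {τ₁ τ₂ : DType} → CSeq H τ₁ τ₂ → List Label
  | _, _, .nil _ => []
  | _, _, .cons p _ s => p :: s.labels

def CSeq.typesList {H : Mesh} : {τ₁ τ₂ : DType} → CSeq H τ₁ τ₂ → List DType
  | _, _, .nil τ => [τ]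
  | τ, _, .cons _ _ s => τ :: s.typesList

/-- The height 𝔥 of a sequence: the maximum `localsize` over all types in it. -/
def CSeq.height {H : Mesh} {τ₁ τ₂ : DType} (s : CSeq H τ₁ τ₂) : ℕ :=
  (s.typesList.map localsize).foldr max 0

/-- Cost of a single step with source `σ₁` and target `σ₂`. -/
def stepCost (p : Label) (σ₁ σ₂ : DType) : ℕ :=
  match p with
  | .allGather _ => localsize σ₂
  | .dynSlice _ _ => 0
  | .allToAll _ _ => localsize σ₁
  | .allPermute => localsize σ₁

def CSeq.cost {H : Mesh} : {τ₁ τ₂ : DType} → CSeq H τ₁ τ₂ → ℕ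
  | _, _, .nil _ => 0
  | _, _, @CSeq.cons _ σ₁ σ₂ _ p _ s => stepCost p σ₁ σ₂ + s.cost

/-- Normal form: labels matched by `dynSlice* {allToAll | allPermute}* allGather*`. -/
def NormalFormK (ks : List OpKind) : Prop :=
  ∃ a b c : List OpKind, ks = a ++ b ++ c ∧
    (∀ k ∈ a, k = OpKind.slice) ∧
    (∀ k ∈ b, k = OpKind.toAll ∨ k = OpKind.permute) ∧
    (∀ k ∈ c, k = OpKind.gather)

/-! ## Weak collectives -/

/-- Equivalence of base offset maps. -/
def bomEquiv (H : Mesh) (β₁ β₂ : BOM H) : Prop :=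
  ∃ π : Equiv.Perm (IndexTuple H), β₂ = β₁ ∘ π

/-- The weak collective relation `⟦τ₁⟧_E ▶^p ⟦τ₂⟧_E`, represented on types. -/
def WeakStep (H : Mesh) (p : Label) (τ₁ τ₂ : DType) : Prop :=
  p ≠ Label.allPermute ∧ H.WFType τ₁ ∧ H.WFType τ₂ ∧
  ∃ σ₁ σ₂ : DType, Step H p σ₁ σ₂ ∧
    bomEquiv H (typeOffset H σ₁) (typeOffset H τ₁) ∧
    bomEquiv H (typeOffset H σ₂) (typeOffset H τ₂)

inductive WkSeq (H : Mesh) : DType → DType → Type where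
  | nil (τ : DType) : WkSeq H τ τ
  | cons {τ₁ τ₂ τ₃ : DType} (p : Label) (h : WeakStep H p τ₁ τ₂) (s : WkSeq H τ₂ τ₃) :
      WkSeq H τ₁ τ₃

def WkSeq.labels {H : Mesh} : {τ₁ τ₂ : DType} → WkSeq H τ₁ τ₂ → List Label
  | _, _, .nil _ => []
  | _, _, .cons p _ s => p :: s.labels

def WkSeq.typesList {H : Mesh} : {τ₁ τ₂ : DType} → WkSeq H τ₁ τ₂ → List DType
  | _, _, .nil τ => [τ]
  | τ, _, .cons _ _ s => τ :: s.typesList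

def WkSeq.height {H : Mesh} {τ₁ τ₂ : DType} (s : WkSeq H τ₁ τ₂) : ℕ :=
  (s.typesList.map localsize).foldr max 0

def WkSeq.cost {H : Mesh} : {τ₁ τ₂ : DType} → WkSeq H τ₁ τ₂ → ℕ
  | _, _, .nil _ => 0
  | _, _, @WkSeq.cons _ σ₁ σ₂ _ p _ s => stepCost p σ₁ σ₂ + s.cost

/-! ## Low-level MPI-style collectives on device assignments -/

abbrev DevMap (H : Mesh) (D : Type) := IndexTuple H ≃ D

structure DevAssign (H : Mesh) (D : Type) where
  dmap : DevMap H D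
  bom : BOM H

inductive LLabel where
  | allGather (x : String)
  | allToAll (x : String) (j : ℕ)
  | dynSlice (i : ℕ) (x : String)
  | allPermute
deriving DecidableEq

def LLabel.kind : LLabel → OpKind
  | .allGather _ => .gather
  | .allToAll _ _ => .toAll
  | .dynSlice _ _ => .slice
  | .allPermute => .permute

inductive LStep (H : Mesh) (D : Type) : LLabel → DevAssign H D → DevAssign H D → Type where
  | gather (τ : DType) (i : ℕ) (c : ℕ) (ys : List String) (x : String) (xs : List String)
      (s n : ℕ) (φ φ' : DevMap H D)
      (hwf : H.WFType τ) (hx : H.hasAxis x n)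
      (hi : τ[i]? = some ⟨c, ys ++ x :: xs, s⟩)
      (hmap : typeOffset H (τ.set i ⟨c, x :: (ys ++ xs), s⟩) ∘ ⇑φ'.symm
            = typeOffset H τ ∘ ⇑φ.symm) :
      LStep H D (.allGather x) ⟨φ, typeOffset H τ⟩
        ⟨φ', typeOffset H (τ.set i ⟨c * n, ys ++ xs, s⟩)⟩
  | toAll (τ : DType) (i j : ℕ) (ci : ℕ) (ys : List String) (x : String) (xs : List String)
      (si cj : ℕ) (xsj : List String) (sj n : ℕ) (φ φ' : DevMap H D)
      (hwf : H.WFType τ) (hij : i ≠ j) (hx : H.hasAxis x n)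
      (hi : τ[i]? = some ⟨ci, ys ++ x :: xs, si⟩)
      (hj : τ[j]? = some ⟨cj, xsj, sj⟩)
      (hdvd : n ∣ cj)
      (hmap : typeOffset H (τ.set i ⟨ci, x :: (ys ++ xs), si⟩) ∘ ⇑φ'.symm
            = typeOffset H τ ∘ ⇑φ.symm) :
      LStep H D (.allToAll x j) ⟨φ, typeOffset H τ⟩
        ⟨φ', typeOffset H ((τ.set i ⟨ci * n, ys ++ xs, si⟩).set j ⟨cj / n, x :: xsj, sj⟩)⟩
  | slice (τ : DType) (i : ℕ) (x : String) (c : ℕ) (xs : List String) (s n : ℕ)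
      (φ : DevMap H D)
      (hwf : H.WFType τ) (hx : H.hasAxis x n) (hfresh : x ∉ typeAxes τ)
      (hi : τ[i]? = some ⟨c * n, xs, s⟩) :
      LStep H D (.dynSlice i x) ⟨φ, typeOffset H τ⟩ ⟨φ, typeOffset H (τ.set i ⟨c, x :: xs, s⟩)⟩
  | permute (τ : DType) (ρ : Equiv.Perm (IndexTuple H)) (β' : BOM H)
      (φ φ' : DevMap H D) (π : Equiv.Perm D)
      (hwf : H.WFType τ)
      (hmap : β' ∘ ⇑φ'.symm = (typeOffset H τ ∘ ⇑ρ) ∘ ⇑φ.symm ∘ ⇑π) :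
      LStep H D .allPermute ⟨φ, typeOffset H τ ∘ ⇑ρ⟩ ⟨φ', β'⟩

def LStep.cost {H : Mesh} {D : Type} :
    {l : LLabel} → {a b : DevAssign H D} → LStep H D l a b → ℕ
  | _, _, _, .gather τ i c ys x xs s n .. => localsize (τ.set i ⟨c * n, ys ++ xs, s⟩)
  | _, _, _, .toAll τ .. => localsize τ
  | _, _, _, .slice .. => 0
  | _, _, _, .permute τ .. => localsize τ

inductive LoSeq (H : Mesh) (D : Type) : DevAssign H D → DevAssign H D → Type where
  | nil (a : DevAssign H D) : LoSeq H D a a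
  | cons {a b c : DevAssign H D} (l : LLabel) (st : LStep H D l a b) (s : LoSeq H D b c) :
      LoSeq H D a c

def LoSeq.labels {H : Mesh} {D : Type} : {a b : DevAssign H D} → LoSeq H D a b → List LLabel
  | _, _, .nil _ => []
  | _, _, .cons l _ s => l :: s.labels

def LoSeq.states {H : Mesh} {D : Type} : {a b : DevAssign H D} → LoSeq H D a b → List (DevAssign H D)
  | _, _, .nil a => [a]
  | a, _, .cons _ _ s => a :: s.states

def LoSeq.cost {H : Mesh} {D : Type} : {a b : DevAssign H D} → LoSeq H D a b → ℕ
  | _, _, .nil _ => 0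
  | _, _, .cons _ st s => st.cost + s.cost

/-! `dimOffset H c xs ι` is `c` times the mixed-radix numeral with digits `ι x` in the bases
`H.size x`, `x ∈ xs`. Such numerals with in-range digits are exactly the numbers below
`∏ H.size x`, and since the axes of `xs` are distinct, the digits can be chosen independently. -/

lemma dimOffset_congr (H : Mesh) (c : ℕ) {xs : List String} {f g : String → ℕ}
    (h : ∀ x ∈ xs, f x = g x) : dimOffset H c xs f = dimOffset H c xs g := by
  induction xs generalizing c with
  | nil => rfl
  | cons x xs ih =>
    rw [dimOffset, dimOffset, h x List.mem_cons_self,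
      ih _ fun y hy => h y (List.mem_cons_of_mem _ hy)]

lemma dimOffset_mul_tile (H : Mesh) (a c : ℕ) (xs : List String) (f : String → ℕ) :
    dimOffset H (a * c) xs f = a * dimOffset H c xs f := by
  induction xs generalizing c with
  | nil => rfl
  | cons x xs ih => rw [dimOffset, dimOffset, mul_assoc a c (H.size x), ih]; ring

lemma dimOffset_eq_tile_mul (H : Mesh) (c : ℕ) (xs : List String) (f : String → ℕ) :
    dimOffset H c xs f = c * dimOffset H 1 xs f := by
  simpa using dimOffset_mul_tile H c 1 xs f

lemma dimOffset_one_cons (H : Mesh) (x : String) (xs : List String) (f : String → ℕ) :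
    dimOffset H 1 (x :: xs) f = f x + H.size x * dimOffset H 1 xs f := by
  rw [dimOffset, one_mul, one_mul, dimOffset_eq_tile_mul]

lemma dimOffset_one_lt_prod (H : Mesh) {xs : List String} {f : String → ℕ}
    (hf : ∀ x ∈ xs, f x < H.size x) : dimOffset H 1 xs f < (xs.map H.size).prod := by
  induction xs with
  | nil => simp [dimOffset]
  | cons x xs ih =>
    have hx := hf x List.mem_cons_self
    have hxs := ih fun y hy => hf y (List.mem_cons_of_mem _ hy)
    rw [dimOffset_one_cons, List.map_cons, List.prod_cons]
    nlinarith

lemma exists_dimOffset_one_eq (H : Mesh) {xs : List String} (hnd : xs.Nodup) {m : ℕ}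
    (hm : m < (xs.map H.size).prod) :
    ∃ f : String → ℕ, (∀ x ∉ xs, f x = 0) ∧ (∀ x ∈ xs, f x < H.size x) ∧
      dimOffset H 1 xs f = m := by
  induction xs generalizing m with
  | nil =>
    refine ⟨0, fun _ _ => rfl, by simp, ?_⟩
    simp_all [dimOffset]
  | cons x xs ih =>
    obtain ⟨hx, hnd⟩ := List.nodup_cons.mp hnd
    rw [List.map_cons, List.prod_cons] at hm
    have hk : 0 < H.size x := Nat.pos_of_mul_pos_right (Nat.zero_lt_of_lt hm)
    obtain ⟨f, hf_supp, hf_lt, hf_eq⟩ :=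
      ih hnd ((Nat.div_lt_iff_lt_mul hk).mpr (by rwa [mul_comm]))
    refine ⟨Function.update f x (m % H.size x), fun y hy => ?_, fun y hy => ?_, ?_⟩
    · rw [Function.update_of_ne (List.ne_of_not_mem_cons hy)]
      exact hf_supp y (List.not_mem_of_not_mem_cons hy)
    · rcases List.mem_cons.mp hy with rfl | hy
      · simpa using Nat.mod_lt m hk
      · rw [Function.update_of_ne (ne_of_mem_of_not_mem hy hx)]
        exact hf_lt y hy
    · rw [dimOffset_one_cons, Function.update_self,
        dimOffset_congr H 1 fun y hy => Function.update_of_ne (ne_of_mem_of_not_mem hy hx) _ _,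
        hf_eq, Nat.mod_add_div]

lemma range_dimOffset_one (H : Mesh) {xs : List String} (hnd : xs.Nodup)
    (hsub : ∀ x ∈ xs, x ∈ H.axes) :
    Set.range (fun ι : IndexTuple H => dimOffset H 1 xs ι.val) = Set.Iio (xs.map H.size).prod := by
  ext m
  constructor
  · rintro ⟨ι, rfl⟩
    exact dimOffset_one_lt_prod H fun x hx => ((ι.2 x).1 (hsub x hx))
  · intro hm
    obtain ⟨f, hf_supp, hf_lt, rfl⟩ := exists_dimOffset_one_eq H hnd hm
    refine ⟨⟨f, fun x => ⟨fun hxH => ?_, fun hxH => hf_supp x (mt (hsub x) hxH)⟩⟩, rfl⟩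
    by_cases hx : x ∈ xs
    · exact hf_lt x hx
    · rw [hf_supp x hx]
      exact H.size_pos x hxH

lemma image_mul_left_Iio {c : ℕ} (hc : 0 < c) (n : ℕ) :
    (c * ·) '' Set.Iio n = {m : ℕ | c ∣ m ∧ m < c * n} := by
  ext m
  constructor
  · rintro ⟨q, hq, rfl⟩
    exact ⟨dvd_mul_right c q, Nat.mul_lt_mul_of_pos_left hq hc⟩
  · rintro ⟨⟨q, rfl⟩, hm⟩
    exact ⟨q, Nat.lt_of_mul_lt_mul_left hm, rfl⟩

/-- Lemma 4.1: the image of the base offset map of a well-formed distributed dimension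
consists of all multiples of the tile size below the global size. -/
theorem stmt0 (H : Mesh) (d : Dim) (h : H.WFDim d) :
    Set.range (fun ι : IndexTuple H => dimOffset H d.tile d.axes ι.val)
      = {m : ℕ | d.tile ∣ m ∧ m < d.global} := by
  obtain ⟨hc, hnd, hsub, hglobal⟩ := h
  have hfactor : (fun ι : IndexTuple H => dimOffset H d.tile d.axes ι.val)
      = (d.tile * ·) ∘ fun ι : IndexTuple H => dimOffset H 1 d.axes ι.val :=
    funext fun ι => dimOffset_eq_tile_mul H _ _ _
  rw [hfactor, Set.range_comp, range_dimOffset_one H hnd hsub, image_mul_left_Iio hc, hglobal]
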